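/- arXiv:2012.00813 — 6 statements merged into one kernel-verified Lean document; each statement's English description precedes it below -/
import Mathlib

section
/- For every real r with 0 < r < 1/2, the achievement set E(x) of the geometric sequence x(n) = r^n (n ≥ 1) is homeomorphic to the Cantor ternary set (equivalently, it is a nonempty compact perfect subset of ℝ with empty interior). -/
/-! If each term of a nonnegative summable sequence `x` exceeds the sum of all later terms, the
first digit of a subsum is read off from whether the subsum reaches `x 0`; by self-similarity,
the subsum map `(ℕ → Bool) → ℝ` is injective. Being continuous on the compact Cantor space, it is
a homeomorphism onto its image, the achievement set, and `ℕ → Bool` is homeomorphic to the Cantor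
set. For `x n = r ^ (n + 1)` the tail condition reads `r / (1 - r) < 1`, i.e. `r < 1 / 2`. -/

/-- The achievement set (set of subsums) of a sequence `x`. -/
def achievementSet (x : ℕ → ℝ) : Set ℝ :=
  {s : ℝ | ∃ ε : ℕ → ℝ, (∀ n, ε n = 0 ∨ ε n = 1) ∧ s = ∑' n, ε n * x n}

open Function Set Topology

noncomputable def subsum (x : ℕ → ℝ) (a : ℕ → Bool) : ℝ :=
  ∑' n, if a n then x n else 0

theorem achievementSet_eq_range_subsum (x : ℕ → ℝ) : achievementSet x = range (subsum x) := by
  ext s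
  constructor
  · rintro ⟨ε, hε, rfl⟩
    refine ⟨fun n => decide (ε n = 1), tsum_congr fun n => ?_⟩
    rcases hε n with h | h <;> simp [h]
  · rintro ⟨a, rfl⟩
    refine ⟨fun n => if a n then 1 else 0, fun n => by cases a n <;> simp, tsum_congr fun n => ?_⟩
    cases h : a n <;> simp [h]

section

variable {x : ℕ → ℝ}

theorem summable_subsum_terms (hx : Summable x) (a : ℕ → Bool) :
    Summable fun n => if a n then x n else 0 :=
  (hx.indicator {n | a n}).congr fun n => by simp [Set.indicator_apply]

theorem continuous_subsum (hx : Summable x) : Continuous (subsum x) := by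
  refine continuous_tsum (fun n => ?_) hx.abs fun n a => ?_
  · exact (continuous_of_discreteTopology (f := fun b : Bool => if b then x n else 0)).comp
      (continuous_apply n)
  · split <;> simp

theorem subsum_eq_ite_add_subsum_succ (hx : Summable x) (a : ℕ → Bool) :
    subsum x a = (if a 0 then x 0 else 0) + subsum (fun n => x (n + 1)) (fun n => a (n + 1)) :=
  (summable_subsum_terms hx a).tsum_eq_zero_add

theorem subsum_nonneg (hx0 : ∀ n, 0 ≤ x n) (a : ℕ → Bool) : 0 ≤ subsum x a :=
  tsum_nonneg fun n => by split <;> simp [hx0]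

theorem subsum_le_tsum (hx0 : ∀ n, 0 ≤ x n) (hx : Summable x) (a : ℕ → Bool) :
    subsum x a ≤ ∑' n, x n :=
  (summable_subsum_terms hx a).tsum_le_tsum (fun n => by split <;> simp [hx0]) hx

theorem subsum_lt_subsum_of_apply_zero (hx0 : ∀ n, 0 ≤ x n) (hx : Summable x)
    (htail : ∑' n, x (n + 1) < x 0) {a b : ℕ → Bool} (ha : a 0 = true) (hb : b 0 = false) :
    subsum x b < subsum x a := by
  calc subsum x b = subsum (fun n => x (n + 1)) (fun n => b (n + 1)) := by
        simp [subsum_eq_ite_add_subsum_succ hx b, hb]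
    _ ≤ ∑' n, x (n + 1) := subsum_le_tsum (fun n => hx0 _) ((summable_nat_add_iff 1).mpr hx) _
    _ < x 0 := htail
    _ ≤ subsum x a := by
        rw [subsum_eq_ite_add_subsum_succ hx a, ha, if_pos rfl]
        linarith [subsum_nonneg (fun n => hx0 (n + 1)) fun n => a (n + 1)]

theorem apply_zero_eq_of_subsum_eq (hx0 : ∀ n, 0 ≤ x n) (hx : Summable x)
    (htail : ∑' n, x (n + 1) < x 0) {a b : ℕ → Bool} (hab : subsum x a = subsum x b) :
    a 0 = b 0 := by
  cases ha : a 0 <;> cases hb : b 0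
  · rfl
  · exact absurd hab (subsum_lt_subsum_of_apply_zero hx0 hx htail hb ha).ne
  · exact absurd hab (subsum_lt_subsum_of_apply_zero hx0 hx htail ha hb).ne'
  · rfl

theorem subsum_injective (hx0 : ∀ n, 0 ≤ x n) (hx : Summable x)
    (htail : ∀ n, ∑' k, x (k + n + 1) < x n) : Injective (subsum x) := by
  intro a b hab
  funext n
  induction n generalizing x a b with
  | zero => exact apply_zero_eq_of_subsum_eq hx0 hx (htail 0) hab
  | succ n ih =>
    have hhead := apply_zero_eq_of_subsum_eq hx0 hx (htail 0) hab
    rw [subsum_eq_ite_add_subsum_succ hx a, subsum_eq_ite_add_subsum_succ hx b, hhead] at hab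
    exact ih (fun n => hx0 (n + 1)) ((summable_nat_add_iff 1).mpr hx) (fun n => htail (n + 1))
      (add_left_cancel hab)

theorem achievementSet_homeomorph_cantorSet (hx0 : ∀ n, 0 ≤ x n) (hx : Summable x)
    (htail : ∀ n, ∑' k, x (k + n + 1) < x n) : Nonempty (achievementSet x ≃ₜ cantorSet) := by
  have hemb : IsEmbedding (subsum x) :=
    ((continuous_subsum hx).isClosedEmbedding (subsum_injective hx0 hx htail)).isEmbedding
  rw [achievementSet_eq_range_subsum]
  exact ⟨hemb.toHomeomorph.symm.trans cantorSetHomeomorphNatToBool.symm⟩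

end

theorem tsum_geometric_tail_lt {r : ℝ} (hr0 : 0 < r) (hr : r < 1 / 2) (n : ℕ) :
    ∑' k, r ^ (k + n + 1 + 1) < r ^ (n + 1) := by
  have hr1 : r < 1 := by linarith
  calc ∑' k, r ^ (k + n + 1 + 1) = r ^ (n + 1) * (r * (1 - r)⁻¹) := by
        rw [← tsum_geometric_of_lt_one hr0.le hr1, ← tsum_mul_left, ← tsum_mul_left]
        exact tsum_congr fun k => by ring
    _ < r ^ (n + 1) * 1 := by
        gcongr
        rw [← div_eq_mul_inv, div_lt_one (by linarith)]
        linarith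
    _ = r ^ (n + 1) := mul_one _

/-- For `0 < r < 1/2`, the achievement set of the geometric sequence `x(n) = r^n` (`n ≥ 1`)
is homeomorphic to the Cantor ternary set. -/
theorem achievementSet_geometric_homeomorph_cantorSet (r : ℝ) (hr0 : 0 < r) (hr : r < 1 / 2) :
    Nonempty (↥(achievementSet (fun n => r ^ (n + 1))) ≃ₜ ↥cantorSet) := by
  have hr1 : r < 1 := by linarith
  refine achievementSet_homeomorph_cantorSet (fun n => by positivity) ?_
    (tsum_geometric_tail_lt hr0 hr)
  exact (summable_nat_add_iff 1).mpr (summable_geometric_of_lt_one hr0.le hr1)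
end

section
/- (Kakeya) For any sequence x : ℕ → ℝ of positive terms with Σ_{n≥1} x_n < ∞, the achievement set E(x) is a perfect set: it is compact and has no isolated points. -/
lemma achievementSet_eq_image (x : ℕ → ℝ) :
    achievementSet x =
      (fun ε : ℕ → ℝ => ∑' n, ε n * x n) '' Set.univ.pi fun _ => ({0, 1} : Set ℝ) := by
  ext s
  simp [achievementSet, eq_comm]

lemma isCompact_achievementSet {x : ℕ → ℝ} (hx : Summable x) :
    IsCompact (achievementSet x) := by
  rw [achievementSet_eq_image]
  refine (isCompact_univ_pi fun _ => (Set.toFinite _).isCompact).image_of_continuousOn ?_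
  refine continuousOn_tsum (fun n => ((continuous_apply n).mul continuous_const).continuousOn)
    hx.abs fun n ε hε => ?_
  obtain h | h : ε n = 0 ∨ ε n = 1 := hε n trivial <;> simp [h]

lemma exists_mem_achievementSet_abs_sub_eq {x : ℕ → ℝ} (hx : Summable x) {s : ℝ}
    (hs : s ∈ achievementSet x) (n : ℕ) : ∃ t ∈ achievementSet x, |t - s| = |x n| := by
  classical
  obtain ⟨ε, hε, rfl⟩ := hs
  have hεx : Summable fun m => ε m * x m :=
    .of_norm_bounded hx.abs fun m => by rcases hε m with h | h <;> simp [h]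
  set ε' := Function.update ε n (1 - ε n)
  have hε' : ∀ m, ε' m = 0 ∨ ε' m = 1 := by
    intro m
    rcases eq_or_ne m n with rfl | hm
    · rcases hε m with h | h <;> simp [ε', h]
    · simpa [ε', hm] using hε m
  have hflip : (fun m => ε' m * x m) =
      Function.update (fun m => ε m * x m) n ((1 - ε n) * x n) := by
    ext m
    rcases eq_or_ne m n with rfl | hm <;> simp [ε', *]
  refine ⟨_, ⟨ε', hε', rfl⟩, ?_⟩
  rw [hflip, (hεx.hasSum.update n _).tsum_eq]
  rcases hε n with h | h <;> simp [h, abs_neg]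

lemma preperfect_achievementSet {x : ℕ → ℝ} (hx : Summable x) (hx₀ : ∀ n, x n ≠ 0) :
    Preperfect (achievementSet x) := by
  intro s hs
  rw [accPt_iff_nhds]
  intro U hU
  obtain ⟨δ, hδ, hball⟩ := Metric.mem_nhds_iff.mp hU
  obtain ⟨n, hn⟩ := (hx.tendsto_atTop_zero.eventually (Metric.ball_mem_nhds 0 hδ)).exists
  obtain ⟨t, ht, hts⟩ := exists_mem_achievementSet_abs_sub_eq hx hs n
  refine ⟨t, ⟨hball ?_, ht⟩, ?_⟩
  · rwa [Metric.mem_ball, Real.dist_eq, hts, ← Real.norm_eq_abs, ← mem_ball_zero_iff]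
  · rintro rfl
    exact hx₀ n (abs_eq_zero.mp (by simpa using hts.symm))

/-- (Kakeya) For a summable sequence of positive terms, the achievement set is a perfect set:
compact with no isolated points. -/
theorem achievementSet_isCompact_perfect (x : ℕ → ℝ) (hpos : ∀ n, 0 < x n)
    (hsum : Summable x) :
    IsCompact (achievementSet x) ∧ Perfect (achievementSet x) :=
  have hcomp := isCompact_achievementSet hsum
  ⟨hcomp, hcomp.isClosed, preperfect_achievementSet hsum fun n => (hpos n).ne'⟩
end

section
/- (Kakeya) Let x : ℕ → ℝ be a sequence of positive terms with Σ_{n≥1} x_n < ∞ and tails R_n = Σ_{i>n} x_i. If x_n ≤ R_n for all sufficiently large n, then the achievement set E(x) is a finite union of closed bounded intervals. -/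
/-- The `n`-th tail `R_n = ∑_{i > n} x_i` of a sequence (indices `0,1,2,…` denote the
terms `x_1, x_2, x_3, …`). -/
noncomputable def seqTail (x : ℕ → ℝ) (n : ℕ) : ℝ := ∑' i : ℕ, x (n + 1 + i)

/-- `A` is a finite union of closed bounded intervals. -/
def IsFiniteUnionOfClosedIntervals (A : Set ℝ) : Prop :=
  ∃ s : Finset (ℝ × ℝ), A = ⋃ p ∈ s, Set.Icc p.1 p.2

open Filter Topology

section AchievementSet

variable {x ε : ℕ → ℝ}

theorem Summable.mul_left_of_zero_or_one (hx : Summable x) (hε : ∀ n, ε n = 0 ∨ ε n = 1) :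
    Summable fun n => ε n * x n :=
  hx.norm.of_norm_bounded fun n => by rcases hε n with h | h <;> simp [h]

theorem mul_add_mem_achievementSet (hx : Summable x) {a t : ℝ} (ha : a = 0 ∨ a = 1)
    (ht : t ∈ achievementSet fun n => x (n + 1)) : a * x 0 + t ∈ achievementSet x := by
  obtain ⟨δ, hδ, rfl⟩ := ht
  let ε : ℕ → ℝ := fun | 0 => a | n + 1 => δ n
  have hε : ∀ n, ε n = 0 ∨ ε n = 1 := by
    rintro (_ | n)
    exacts [ha, hδ n]
  exact ⟨ε, hε, ((hx.mul_left_of_zero_or_one hε).tsum_eq_zero_add).symm⟩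

theorem achievementSet_eq_union_image_add (hx : Summable x) :
    achievementSet x = achievementSet (fun n => x (n + 1)) ∪
      (x 0 + ·) '' achievementSet (fun n => x (n + 1)) := by
  ext s
  constructor
  · rintro ⟨ε, hε, rfl⟩
    have htail : ∑' n, ε (n + 1) * x (n + 1) ∈ achievementSet fun n => x (n + 1) :=
      ⟨fun n => ε (n + 1), fun n => hε (n + 1), rfl⟩
    rw [(hx.mul_left_of_zero_or_one hε).tsum_eq_zero_add]
    rcases hε 0 with h0 | h0
    · left
      simpa [h0] using htail
    · right
      exact ⟨_, htail, by simp [h0]⟩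
  · rintro (hs | ⟨t, ht, rfl⟩)
    · simpa using mul_add_mem_achievementSet hx (Or.inl rfl) hs
    · simpa using mul_add_mem_achievementSet hx (Or.inr rfl) ht

theorem achievementSet_subset_Icc (hx0 : ∀ n, 0 ≤ x n) (hx : Summable x) :
    achievementSet x ⊆ Set.Icc 0 (∑' n, x n) := by
  rintro _ ⟨ε, hε, rfl⟩
  have hεx : ∀ n, 0 ≤ ε n * x n ∧ ε n * x n ≤ x n := fun n => by
    rcases hε n with h | h <;> simp [h, hx0 n]
  exact ⟨tsum_nonneg fun n => (hεx n).1,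
    (hx.mul_left_of_zero_or_one hε).tsum_le_tsum (fun n => (hεx n).2) hx⟩

end AchievementSet

section SeqTail

variable {x : ℕ → ℝ}

theorem seqTail_eq_tsum_nat_add (x : ℕ → ℝ) (n : ℕ) :
    seqTail x n = ∑' i, x (i + (n + 1)) :=
  tsum_congr fun i => by rw [add_comm]

theorem seqTail_nat_add (x : ℕ → ℝ) (N n : ℕ) :
    seqTail (fun i => x (i + N)) n = seqTail x (n + N) :=
  tsum_congr fun i => congrArg x (by omega)

theorem tendsto_seqTail (x : ℕ → ℝ) : Tendsto (seqTail x) atTop (𝓝 0) := by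
  simpa only [Function.comp_def, ← seqTail_eq_tsum_nat_add] using
    (tendsto_sum_nat_add x).comp (tendsto_add_atTop_nat 1)

theorem tsum_eq_add_seqTail (hx : Summable x) : ∑' n, x n = x 0 + seqTail x 0 := by
  rw [hx.tsum_eq_zero_add, seqTail_eq_tsum_nat_add]

theorem seqTail_eq_add_seqTail (hx : Summable x) (n : ℕ) :
    seqTail x n = x (n + 1) + seqTail x (n + 1) := by
  have hshift : Summable fun i => x (i + (n + 1)) := (summable_nat_add_iff (n + 1)).2 hx
  rw [seqTail_eq_tsum_nat_add, hshift.tsum_eq_zero_add, seqTail_eq_tsum_nat_add, zero_add]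
  congr 1
  exact tsum_congr fun i => by congr 1; omega

end SeqTail

section Greedy

noncomputable def greedyPartialSum (x : ℕ → ℝ) (s : ℝ) : ℕ → ℝ
  | 0 => 0
  | n + 1 =>
    if greedyPartialSum x s n + x n ≤ s then greedyPartialSum x s n + x n
    else greedyPartialSum x s n

noncomputable def greedyDigit (x : ℕ → ℝ) (s : ℝ) (n : ℕ) : ℝ :=
  if greedyPartialSum x s n + x n ≤ s then 1 else 0

variable {x : ℕ → ℝ} {s : ℝ}

theorem greedyDigit_eq_zero_or_one (n : ℕ) : greedyDigit x s n = 0 ∨ greedyDigit x s n = 1 := by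
  unfold greedyDigit
  split_ifs <;> simp

theorem greedyPartialSum_succ (n : ℕ) :
    greedyPartialSum x s (n + 1) = greedyPartialSum x s n + greedyDigit x s n * x n := by
  simp only [greedyPartialSum, greedyDigit]
  split_ifs <;> simp

theorem greedyPartialSum_eq_sum (n : ℕ) :
    greedyPartialSum x s n = ∑ i ∈ Finset.range n, greedyDigit x s i * x i := by
  induction n with
  | zero => rfl
  | succ n ih => rw [greedyPartialSum_succ, Finset.sum_range_succ, ih]

theorem greedyPartialSum_remainder_mem_Icc (hx : Summable x) (htail : ∀ n, x n ≤ seqTail x n)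
    (hs : s ∈ Set.Icc 0 (∑' n, x n)) (n : ℕ) :
    s - greedyPartialSum x s n ∈ Set.Icc 0 (x n + seqTail x n) := by
  induction n with
  | zero =>
    rw [← tsum_eq_add_seqTail hx]
    simpa [greedyPartialSum] using hs
  | succ n ih =>
    rw [← seqTail_eq_add_seqTail hx]
    simp only [greedyPartialSum, Set.mem_Icc] at ih ⊢
    split_ifs with hfit
    · constructor <;> linarith
    · constructor <;> linarith [htail n]

theorem hasSum_greedyDigit_mul (hx : Summable x) (htail : ∀ n, x n ≤ seqTail x n)
    (hs : s ∈ Set.Icc 0 (∑' n, x n)) : HasSum (fun n => greedyDigit x s n * x n) s := by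
  rw [(hx.mul_left_of_zero_or_one greedyDigit_eq_zero_or_one).hasSum_iff_tendsto_nat]
  simp only [← greedyPartialSum_eq_sum]
  have hbound : Tendsto (fun n => x n + seqTail x n) atTop (𝓝 0) := by
    simpa using hx.tendsto_atTop_zero.add (tendsto_seqTail x)
  have hremainder : Tendsto (fun n => s - greedyPartialSum x s n) atTop (𝓝 0) :=
    squeeze_zero (fun n => (greedyPartialSum_remainder_mem_Icc hx htail hs n).1)
      (fun n => (greedyPartialSum_remainder_mem_Icc hx htail hs n).2) hbound
  simpa using hremainder.const_sub s

end Greedy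

theorem achievementSet_eq_Icc_of_le_seqTail {x : ℕ → ℝ} (hx0 : ∀ n, 0 ≤ x n) (hx : Summable x)
    (htail : ∀ n, x n ≤ seqTail x n) : achievementSet x = Set.Icc 0 (∑' n, x n) :=
  (achievementSet_subset_Icc hx0 hx).antisymm fun s hs =>
    ⟨greedyDigit x s, greedyDigit_eq_zero_or_one,
      (hasSum_greedyDigit_mul hx htail hs).tsum_eq.symm⟩

theorem isFiniteUnionOfClosedIntervals_Icc (a b : ℝ) :
    IsFiniteUnionOfClosedIntervals (Set.Icc a b) :=
  ⟨{(a, b)}, by simp⟩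

namespace IsFiniteUnionOfClosedIntervals

theorem union {A B : Set ℝ} (hA : IsFiniteUnionOfClosedIntervals A)
    (hB : IsFiniteUnionOfClosedIntervals B) : IsFiniteUnionOfClosedIntervals (A ∪ B) := by
  classical
  obtain ⟨s, rfl⟩ := hA
  obtain ⟨t, rfl⟩ := hB
  exact ⟨s ∪ t, (Finset.set_biUnion_union s t _).symm⟩

theorem image_const_add {A : Set ℝ} (hA : IsFiniteUnionOfClosedIntervals A) (c : ℝ) :
    IsFiniteUnionOfClosedIntervals ((c + ·) '' A) := by
  classical
  obtain ⟨s, rfl⟩ := hA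
  refine ⟨s.image fun p => (c + p.1, c + p.2), ?_⟩
  simp only [Set.image_iUnion₂, Set.image_const_add_Icc, Finset.set_biUnion_finset_image]

theorem achievementSet_of_nat_add {x : ℕ → ℝ} (hx : Summable x) (N : ℕ)
    (hN : IsFiniteUnionOfClosedIntervals (achievementSet fun i => x (i + N))) :
    IsFiniteUnionOfClosedIntervals (achievementSet x) := by
  induction N generalizing x with
  | zero => simpa using hN
  | succ N ih =>
    have hshift : IsFiniteUnionOfClosedIntervals (achievementSet fun n => x (n + 1)) :=
      ih ((summable_nat_add_iff 1).2 hx) (by simpa only [add_assoc] using hN)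
    rw [achievementSet_eq_union_image_add hx]
    exact hshift.union (hshift.image_const_add (x 0))

end IsFiniteUnionOfClosedIntervals

/-- (Kakeya) If `x_n ≤ R_n` for all sufficiently large `n`, then the achievement set is a
finite union of closed bounded intervals. -/
theorem achievementSet_finite_union_of_le_tail (x : ℕ → ℝ) (hpos : ∀ n, 0 < x n)
    (hsum : Summable x) (h : ∀ᶠ n in Filter.atTop, x n ≤ seqTail x n) :
    IsFiniteUnionOfClosedIntervals (achievementSet x) := by
  obtain ⟨N, hN⟩ := Filter.eventually_atTop.1 h
  have htail : ∀ n, x (n + N) ≤ seqTail (fun i => x (i + N)) n := fun n => by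
    rw [seqTail_nat_add]
    exact hN _ (Nat.le_add_left N n)
  refine IsFiniteUnionOfClosedIntervals.achievementSet_of_nat_add hsum N ?_
  rw [achievementSet_eq_Icc_of_le_seqTail (fun n => (hpos _).le)
    ((summable_nat_add_iff N).2 hsum) htail]
  exact isFiniteUnionOfClosedIntervals_Icc _ _
end

section
/- (Nymann–Saenz gap lemma) Let x : ℕ → ℝ be a sequence of positive terms with total sum s = Σ_{n≥1} x_n < ∞ and achievement set E = E(x). If the open interval (a,b) is a gap of E (a bounded connected component of ℝ \ E with a, b ∈ E), then there exist ε > 0 and ε' > 0 such that E ∩ [b, b+ε] = b + (E ∩ [0, ε]) and E ∩ [a−ε', a] = (a − s) + (E ∩ [s−ε', s]). -/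
open Set Filter Topology
open scoped Pointwise

def achievementSetOn (x : ℕ → ℝ) (A : Set ℕ) : Set ℝ :=
  (fun B : Set ℕ => ∑' n, B.indicator x n) '' 𝒫 A

section AchievementSetOn

variable {x : ℕ → ℝ} {A B : Set ℕ}

theorem achievementSet_eq_achievementSetOn_univ :
    achievementSet x = achievementSetOn x univ := by
  ext t
  constructor
  · rintro ⟨ε, hε, rfl⟩
    refine ⟨{n | ε n = 1}, subset_univ _, tsum_congr fun n => ?_⟩
    rcases hε n with h | h <;> simp [h, indicator]
  · rintro ⟨B, -, rfl⟩
    refine ⟨B.indicator 1, fun n => ?_, tsum_congr fun n => ?_⟩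
    · by_cases h : n ∈ B <;> simp [h]
    · by_cases h : n ∈ B <;> simp [h]

theorem achievementSetOn_mono (h : A ⊆ B) : achievementSetOn x A ⊆ achievementSetOn x B :=
  image_mono (powerset_mono.2 h)

theorem achievementSetOn_finite (hA : A.Finite) : (achievementSetOn x A).Finite :=
  hA.powerset.image _

theorem achievementSetOn_union (hsum : Summable x) (hAB : Disjoint A B) :
    achievementSetOn x (A ∪ B) = achievementSetOn x A + achievementSetOn x B := by
  ext t
  constructor
  · rintro ⟨C, hC, rfl⟩
    have hsplit : C = (C ∩ A) ∪ (C ∩ B) := by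
      rw [← inter_union_distrib_left, inter_eq_left.2 hC]
    have hdisj : Disjoint (C ∩ A) (C ∩ B) :=
      hAB.mono inter_subset_right inter_subset_right
    refine ⟨_, ⟨C ∩ A, inter_subset_right, rfl⟩, _, ⟨C ∩ B, inter_subset_right, rfl⟩, ?_⟩
    dsimp only
    conv_rhs => rw [hsplit, indicator_union_of_disjoint hdisj]
    exact ((hsum.indicator _).tsum_add (hsum.indicator _)).symm
  · intro ht
    obtain ⟨_, ⟨C, hC, rfl⟩, _, ⟨D, hD, rfl⟩, rfl⟩ := mem_add.1 ht
    refine ⟨C ∪ D, union_subset_union hC hD, ?_⟩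
    dsimp only
    rw [indicator_union_of_disjoint (hAB.mono hC hD)]
    exact (hsum.indicator _).tsum_add (hsum.indicator _)

theorem mem_achievementSetOn_bounds (hnonneg : ∀ n, 0 ≤ x n) (hsum : Summable x) {e : ℝ}
    (he : e ∈ achievementSetOn x A) : 0 ≤ e ∧ e ≤ ∑' n, A.indicator x n := by
  obtain ⟨C, hC, rfl⟩ := he
  exact ⟨tsum_nonneg (indicator_nonneg fun n _ => hnonneg n),
    (hsum.indicator C).tsum_le_tsum (indicator_le_indicator_of_subset hC hnonneg)
      (hsum.indicator A)⟩

theorem mem_achievementSetOn_of_lt (hnonneg : ∀ n, 0 ≤ x n) (hsum : Summable x) {e : ℝ}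
    (he : e ∈ achievementSetOn x univ) (hlt : ∀ n ∉ A, e < x n) : e ∈ achievementSetOn x A := by
  obtain ⟨C, -, rfl⟩ := he
  refine ⟨C, fun n hn => ?_, rfl⟩
  by_contra hnA
  have hle : C.indicator x n ≤ ∑' k, C.indicator x k :=
    (hsum.indicator C).le_tsum n fun k _ => indicator_nonneg (fun k _ => hnonneg k) k
  rw [indicator_of_mem hn] at hle
  exact (hlt n hnA).not_ge hle

end AchievementSetOn

theorem image_const_sub_tsum_achievementSet {x : ℕ → ℝ} (hsum : Summable x) :
    (fun t => (∑' n, x n) - t) '' achievementSet x = achievementSet x := by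
  rw [achievementSet_eq_achievementSetOn_univ]
  have hcompl : ∀ t ∈ achievementSetOn x univ, (∑' n, x n) - t ∈ achievementSetOn x univ := by
    rintro _ ⟨C, -, rfl⟩
    refine ⟨Cᶜ, subset_univ _, ?_⟩
    dsimp only
    rw [indicator_compl, Pi.sub_def, hsum.tsum_sub (hsum.indicator C)]
  exact Subset.antisymm (image_subset_iff.2 hcompl)
    fun t ht => ⟨_, hcompl t ht, sub_sub_cancel _ t⟩

theorem eventually_eq_of_add_mem_Icc {P T : Set ℝ} {a b δ : ℝ} (hP : P.Finite)
    (hPgap : ∀ σ ∈ P, σ ∉ Ioo a b) (hT : ∀ e ∈ T, 0 ≤ e ∧ e ≤ δ) (hδ : δ < b - a) :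
    ∀ᶠ ε in 𝓝[>] (0 : ℝ), ∀ σ ∈ P, ∀ e ∈ T, σ + e ∈ Icc b (b + ε) → σ = b := by
  have hbelow : ∀ᶠ ε in 𝓝[>] (0 : ℝ), ∀ σ ∈ P, b < σ → ε < σ - b := by
    refine hP.eventually_all.2 fun σ _ => ?_
    by_cases h : b < σ
    · filter_upwards [nhdsWithin_le_nhds (eventually_lt_nhds (sub_pos.2 h))] with ε hε _ using hε
    · exact .of_forall fun _ h' => absurd h' h
  filter_upwards [hbelow] with ε hε σ hσ e he ⟨hbσe, hσeb⟩
  obtain ⟨he0, heδ⟩ := hT e he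
  have hσb : σ ≤ b := not_lt.1 fun h => by linarith [hε σ hσ h]
  by_contra hne
  exact hPgap σ hσ ⟨by linarith, lt_of_le_of_ne hσb hne⟩

section Gap

variable {x : ℕ → ℝ} {a b : ℝ}

theorem exists_achievementSet_Icc_right_of_gap (hpos : ∀ n, 0 < x n) (hsum : Summable x)
    (hb : b ∈ achievementSet x) (hab : a < b) (hgap : Ioo a b ∩ achievementSet x = ∅) :
    ∃ ε > (0 : ℝ), achievementSet x ∩ Icc b (b + ε) =
      (fun t => b + t) '' (achievementSet x ∩ Icc 0 ε) := by
  have hnonneg : ∀ n, 0 ≤ x n := fun n => (hpos n).le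
  rw [achievementSet_eq_achievementSetOn_univ] at hb hgap ⊢
  set E := achievementSetOn x univ
  obtain ⟨S, hS⟩ : ∃ S : Finset ℕ, ∑' n, (↑S : Set ℕ)ᶜ.indicator x n < b - a := by
    obtain ⟨S, hS⟩ :=
      ((tendsto_tsum_compl_atTop_zero x).eventually_lt_const (sub_pos.2 hab)).exists
    exact ⟨S, by rwa [← tsum_subtype]⟩
  set P := achievementSetOn x S
  set T := achievementSetOn x (↑S)ᶜ
  have hE : E = P + T := by
    rw [← achievementSetOn_union hsum disjoint_compl_right, union_compl_self]
  have hPE : P ⊆ E := achievementSetOn_mono (subset_univ _)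
  have hTE : T ⊆ E := achievementSetOn_mono (subset_univ _)
  obtain ⟨ε, hpart, hsmall, hεpos⟩ : ∃ ε, (∀ σ ∈ P, ∀ e ∈ T, σ + e ∈ Icc b (b + ε) → σ = b) ∧
      (∀ n ∈ S, ε < x n) ∧ 0 < ε :=
    ((eventually_eq_of_add_mem_Icc (achievementSetOn_finite S.finite_toSet)
      (fun σ hσ hmem => hgap.subset ⟨hmem, hPE hσ⟩)
      (fun e he => mem_achievementSetOn_bounds hnonneg hsum he) hS).and
      ((eventually_all_finset S).2 (fun n _ => nhdsWithin_le_nhds (eventually_lt_nhds (hpos n)))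
        |>.and self_mem_nhdsWithin)).exists
  have hbP : b ∈ P := by
    obtain ⟨σ, hσ, e, he, hσe⟩ := mem_add.1 (hE ▸ hb)
    rwa [← hpart σ hσ e he (by rw [hσe]; exact ⟨le_rfl, by linarith⟩)]
  refine ⟨ε, hεpos, Subset.antisymm ?_ ?_⟩
  · rintro t ⟨ht, htb⟩
    obtain ⟨σ, hσ, e, he, rfl⟩ := mem_add.1 (hE ▸ ht)
    obtain rfl := hpart σ hσ e he htb
    exact ⟨e, ⟨hTE he, by simpa using htb⟩, rfl⟩
  · rintro _ ⟨e, ⟨he, he0, heε⟩, rfl⟩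
    have heT : e ∈ T := mem_achievementSetOn_of_lt hnonneg hsum he
      fun n hn => heε.trans_lt (hsmall n (not_not.1 hn))
    exact ⟨hE ▸ add_mem_add hbP heT, by linarith, by linarith⟩

theorem exists_achievementSet_Icc_left_of_gap (hpos : ∀ n, 0 < x n) (hsum : Summable x)
    (ha : a ∈ achievementSet x) (hab : a < b) (hgap : Ioo a b ∩ achievementSet x = ∅) :
    ∃ ε' > (0 : ℝ), achievementSet x ∩ Icc (a - ε') a =
      (fun t => (a - ∑' n, x n) + t) ''
        (achievementSet x ∩ Icc ((∑' n, x n) - ε') (∑' n, x n)) := by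
  set E := achievementSet x
  set s := ∑' n, x n
  have hρE : (fun t => s - t) '' E = E := image_const_sub_tsum_achievementSet hsum
  have hρinj : (fun t => s - t).Injective := sub_right_injective
  have hρIcc : ∀ p q, (fun t => s - t) '' (E ∩ Icc p q) = E ∩ Icc (s - q) (s - p) :=
    fun p q => by rw [image_inter hρinj, hρE, image_const_sub_Icc]
  have hgap' : Ioo (s - b) (s - a) ∩ E = ∅ := by
    rw [← image_const_sub_Ioo, ← hρE, ← image_inter hρinj, hgap, image_empty]
  have hsa : s - a ∈ E := hρE ▸ mem_image_of_mem (fun t => s - t) ha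
  obtain ⟨ε', hε', hright⟩ :=
    exists_achievementSet_Icc_right_of_gap hpos hsum hsa (by linarith) hgap'
  refine ⟨ε', hε', ?_⟩
  calc E ∩ Icc (a - ε') a = (fun t => s - t) '' (E ∩ Icc (s - a) (s - a + ε')) := by
        rw [hρIcc]
        congr 2 <;> ring
    _ = (fun t => s - t) '' ((fun t => s - a + t) '' (E ∩ Icc 0 ε')) := by rw [hright]
    _ = (fun t => a - s + t) '' ((fun t => s - t) '' (E ∩ Icc 0 ε')) := by
        simp only [image_image]
        congr 1
        funext t
        ring
    _ = (fun t => a - s + t) '' (E ∩ Icc (s - ε') s) := by rw [hρIcc, sub_zero]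

end Gap

/-- (Nymann–Saenz gap lemma) If `(a,b)` is a gap of `E = E(x)` (a bounded connected component
of `ℝ \ E`, i.e. `a, b ∈ E`, `a < b` and `(a,b) ∩ E = ∅`), then there are `ε, ε' > 0` with
`E ∩ [b, b+ε] = b + (E ∩ [0, ε])` and `E ∩ [a-ε', a] = (a - s) + (E ∩ [s-ε', s])`,
where `s` is the total sum of the series. -/
theorem achievementSet_gap_lemma (x : ℕ → ℝ) (hpos : ∀ n, 0 < x n) (hsum : Summable x)
    (a b : ℝ) (ha : a ∈ achievementSet x) (hb : b ∈ achievementSet x) (hab : a < b)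
    (hgap : Set.Ioo a b ∩ achievementSet x = ∅) :
    ∃ ε > (0 : ℝ), ∃ ε' > (0 : ℝ),
      achievementSet x ∩ Set.Icc b (b + ε) =
        (fun t => b + t) '' (achievementSet x ∩ Set.Icc 0 ε) ∧
      achievementSet x ∩ Set.Icc (a - ε') a =
        (fun t => (a - ∑' n, x n) + t) ''
          (achievementSet x ∩ Set.Icc ((∑' n, x n) - ε') (∑' n, x n)) := by
  obtain ⟨ε, hε, hright⟩ := exists_achievementSet_Icc_right_of_gap hpos hsum hb hab hgap
  obtain ⟨ε', hε', hleft⟩ := exists_achievementSet_Icc_left_of_gap hpos hsum ha hab hgap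
  exact ⟨ε, hε, ε', hε', hright, hleft⟩
end

section
/- (Kenyon–Nitecki) Let n ≥ 2 be an integer and let d_0, d_1, …, d_{n−1} be integers with d_i ≡ i (mod n) for each i. Then the set S = { Σ_{i≥1} a_i / n^i : a_i ∈ {d_0, d_1, …, d_{n−1}} for all i } of generalized base-n expansions using these digits has nonempty interior in ℝ. -/
/-!
The set `S` of expansions is compact. Since the digits form a complete residue system modulo `n`,
the first `m` digits can be chosen so that their contribution agrees with `⌊n^m x⌋ / n^m` modulo
`ℤ`, so every real `x` lies within `O(n^{-m})` of `S + ℤ`. The closed set `S + ℤ` is therefore all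
of `ℝ`, and by Baire one of the countably many translates `k + S`, hence `S` itself, has nonempty
interior.
-/

open Set Filter Topology Pointwise

noncomputable def digitExpansion {ι : Type*} (n : ℕ) (d : ι → ℝ) (a : ℕ → ι) : ℝ :=
  ∑' i, d (a i) / (n : ℝ) ^ (i + 1)

section Analytic

variable {ι : Type*} {n : ℕ} (d : ι → ℝ)

lemma exists_summable_bound_digitExpansion [Finite ι] (hn : 1 < n) :
    ∃ u : ℕ → ℝ, Summable u ∧ ∀ (a : ℕ → ι) i, ‖d (a i) / (n : ℝ) ^ (i + 1)‖ ≤ u i := by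
  obtain ⟨M, hM⟩ := (finite_range fun j => |d j|).bddAbove
  have hn' : (1 : ℝ) < n := by exact_mod_cast hn
  refine ⟨fun i => M * ((n : ℝ)⁻¹) ^ (i + 1), ?_, fun a i => ?_⟩
  · exact ((summable_nat_add_iff 1).mpr
      (summable_geometric_of_lt_one (by positivity) (inv_lt_one_of_one_lt₀ hn'))).mul_left M
  · dsimp only
    rw [norm_div, norm_pow, Real.norm_natCast, Real.norm_eq_abs, inv_pow, ← div_eq_mul_inv]
    gcongr
    exact hM ⟨a i, rfl⟩

lemma summable_digitExpansion [Finite ι] (hn : 1 < n) (a : ℕ → ι) :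
    Summable fun i => d (a i) / (n : ℝ) ^ (i + 1) :=
  let ⟨_, hu, hle⟩ := exists_summable_bound_digitExpansion d hn
  .of_norm_bounded hu (hle a)

lemma continuous_digitExpansion [TopologicalSpace ι] [DiscreteTopology ι] [Finite ι]
    (hn : 1 < n) : Continuous (digitExpansion n d) := by
  obtain ⟨u, hu, hle⟩ := exists_summable_bound_digitExpansion d hn
  exact continuous_tsum
    (fun i => (continuous_of_discreteTopology.comp (continuous_apply i)).div_const _) hu
    (fun i a => hle a i)

lemma digitExpansion_eq_sum_add [Finite ι] (hn : 1 < n) (a : ℕ → ι) (m : ℕ) :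
    digitExpansion n d a = ∑ i ∈ Finset.range m, d (a i) / (n : ℝ) ^ (i + 1)
      + digitExpansion n d (fun i => a (i + m)) / (n : ℝ) ^ m := by
  rw [digitExpansion, ← (summable_digitExpansion d hn a).sum_add_tsum_nat_add m, digitExpansion,
    ← tsum_div_const]
  congr 1
  refine tsum_congr fun i => ?_
  rw [div_div, ← pow_add]
  ring_nf

end Analytic

section CompleteResidueSystem

variable {n : ℕ} [NeZero n] (d : Fin n → ℤ) (hd : ∀ i : Fin n, d i ≡ (i : ℤ) [ZMOD (n : ℤ)])
include hd

lemma exists_digit_modEq (t : ℤ) : ∃ j : Fin n, d j ≡ t [ZMOD (n : ℤ)] := by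
  refine ⟨⟨(t : ZMod n).val, ZMod.val_lt _⟩, (hd _).trans ?_⟩
  rw [← ZMod.intCast_eq_intCast_iff]
  simp

lemma exists_sum_digits_eq_div_pow_add_int (m : ℕ) (t : ℤ) :
    ∃ (a : ℕ → Fin n) (k : ℤ),
      ∑ i ∈ Finset.range m, (d (a i) : ℝ) / (n : ℝ) ^ (i + 1) = t / (n : ℝ) ^ m + k := by
  induction m generalizing t with
  | zero => exact ⟨fun _ => 0, -t, by simp⟩
  | succ m ih =>
    obtain ⟨j, hj⟩ := exists_digit_modEq d hd t
    obtain ⟨t', ht'⟩ := hj.dvd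
    obtain ⟨a, k, hak⟩ := ih t'
    refine ⟨Function.update a m j, k, ?_⟩
    have hsum : ∑ i ∈ Finset.range m, (d (Function.update a m j i) : ℝ) / (n : ℝ) ^ (i + 1)
        = ∑ i ∈ Finset.range m, (d (a i) : ℝ) / (n : ℝ) ^ (i + 1) :=
      Finset.sum_congr rfl fun i hi => by
        rw [Function.update_of_ne (Finset.mem_range.mp hi).ne]
    have ht : (t : ℝ) = n * t' + d j := by exact_mod_cast (by linarith : t = n * t' + d j)
    have : (n : ℝ) ≠ 0 := NeZero.ne _
    rw [Finset.sum_range_succ, hsum, hak, Function.update_self, ht]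
    field_simp
    ring

end CompleteResidueSystem

section Covering

variable {n : ℕ} (hn : 1 < n) (d : Fin n → ℤ) (hd : ∀ i : Fin n, d i ≡ (i : ℤ) [ZMOD (n : ℤ)])
include hn hd

lemma exists_abs_digitExpansion_sub_int_sub_le {B : ℝ}
    (hB : ∀ a, |digitExpansion n (fun j => (d j : ℝ)) a| ≤ B) (x : ℝ) (m : ℕ) :
    ∃ (a : ℕ → Fin n) (k : ℤ),
      |digitExpansion n (fun j => (d j : ℝ)) a - k - x| ≤ (B + 1) / (n : ℝ) ^ m := by
  have : NeZero n := ⟨by omega⟩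
  set t := ⌊(n : ℝ) ^ m * x⌋
  obtain ⟨a, k, hak⟩ := exists_sum_digits_eq_div_pow_add_int d hd m t
  refine ⟨a, k, ?_⟩
  set τ := digitExpansion n (fun j => (d j : ℝ)) fun i => a (i + m)
  have hpos : (0 : ℝ) < (n : ℝ) ^ m := by positivity
  have hfloor : |t - (n : ℝ) ^ m * x| ≤ 1 := by
    rw [abs_le]
    constructor <;> linarith [Int.floor_le ((n : ℝ) ^ m * x), Int.lt_floor_add_one ((n : ℝ) ^ m * x)]
  have heq : digitExpansion n (fun j => (d j : ℝ)) a - k - x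
      = ((t - (n : ℝ) ^ m * x) + τ) / (n : ℝ) ^ m := by
    rw [digitExpansion_eq_sum_add _ hn a m, hak]
    field_simp
    ring
  rw [heq, abs_div, abs_of_pos hpos]
  gcongr
  calc |(t - (n : ℝ) ^ m * x) + τ| ≤ |t - (n : ℝ) ^ m * x| + |τ| := abs_add_le _ _
    _ ≤ B + 1 := by linarith [hB fun i => a (i + m)]

lemma iUnion_intCast_vadd_range_digitExpansion :
    ⋃ k : ℤ, (k : ℝ) +ᵥ range (digitExpansion n fun j => (d j : ℝ)) = univ := by
  set S := range (digitExpansion n fun j => (d j : ℝ))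
  have hS : IsCompact S := isCompact_range (continuous_digitExpansion _ hn)
  obtain ⟨B, hB⟩ := hS.isBounded.exists_norm_le
  have hclosed : IsClosed (S + range ((↑) : ℤ → ℝ)) :=
    Real.isClosed_range_intCast.add_left_of_isCompact hS
  have hdense : ∀ x, x ∈ closure (S + range ((↑) : ℤ → ℝ)) := by
    intro x
    rw [Metric.mem_closure_iff]
    intro ε hε
    have hn' : (1 : ℝ) < n := by exact_mod_cast hn
    have hlim : Tendsto (fun m : ℕ => (B + 1) / (n : ℝ) ^ m) atTop (𝓝 0) :=
      tendsto_const_nhds.div_atTop (tendsto_pow_atTop_atTop_of_one_lt hn')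
    obtain ⟨m, hm⟩ := (hlim.eventually (gt_mem_nhds hε)).exists
    obtain ⟨a, k, hak⟩ :=
      exists_abs_digitExpansion_sub_int_sub_le hn d hd (fun a => hB _ ⟨a, rfl⟩) x m
    refine ⟨_, add_mem_add (mem_range_self a) (mem_range_self (-k)), ?_⟩
    rw [dist_comm, Real.dist_eq, Int.cast_neg, ← sub_eq_add_neg]
    exact hak.trans_lt hm
  refine eq_univ_of_forall fun x => ?_
  obtain ⟨_, ⟨a, rfl⟩, _, ⟨k, rfl⟩, rfl⟩ := hclosed.closure_subset (hdense x)
  exact mem_iUnion.mpr ⟨k, _, mem_range_self a, add_comm _ _⟩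

end Covering

/-- (Kenyon–Nitecki) If `n ≥ 2` and `d_0, …, d_{n-1}` are integers with `d_i ≡ i (mod n)`,
then the set of generalized base-`n` expansions using these digits has nonempty interior. -/
theorem kenyon_nitecki (n : ℕ) (hn : 2 ≤ n) (d : Fin n → ℤ)
    (hd : ∀ i : Fin n, d i ≡ (i : ℤ) [ZMOD (n : ℤ)]) :
    (interior {x : ℝ | ∃ a : ℕ → Fin n,
      x = ∑' i : ℕ, (d (a i) : ℝ) / (n : ℝ) ^ (i + 1)}).Nonempty := by
  have hS : {x : ℝ | ∃ a : ℕ → Fin n, x = ∑' i : ℕ, (d (a i) : ℝ) / (n : ℝ) ^ (i + 1)}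
      = range (digitExpansion n fun j => (d j : ℝ)) :=
    ext fun _ => exists_congr fun _ => eq_comm
  rw [hS]
  obtain ⟨k, hk⟩ := nonempty_interior_of_iUnion_of_closed
    (fun k : ℤ => (isCompact_range (continuous_digitExpansion _ hn)).isClosed.vadd (k : ℝ))
    (iUnion_intCast_vadd_range_digitExpansion hn d hd)
  rw [interior_vadd] at hk
  exact vadd_set_nonempty.mp hk
end

section
/- Let (K_i)_{i≥1} be a sequence of compact subsets of [0,∞) with 0 ∈ K_i and diam(K_i) > 0 for every i, such that diam(K_i) → 0 as i → ∞ and Σ_{i≥1} sup(K_i) < ∞ (so that all the series below converge). Then the set S = { Σ_{i≥1} x_i : x_i ∈ K_i for all i } is a perfect set: it is compact and has no isolated points. -/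
/-!
The sum map `x ↦ ∑ xᵢ` is continuous on the compact product `∏ Kᵢ` (the series converges
uniformly, being dominated by `∑ sup Kᵢ`), so its image `S` is compact. Given `s = ∑ xᵢ ∈ S`
and `ε > 0`, pick `i` with `diam Kᵢ < ε` and replace `xᵢ` by another point `y ∈ Kᵢ`
(one exists since `diam Kᵢ > 0`): the new sum lies in `S`, differs from `s`, and is within
`|y - xᵢ| ≤ diam Kᵢ < ε` of it.
-/

/-- The generalized achievement set of a sequence of compact sets `K i`: all sums
`∑_{i} x_i` with `x_i ∈ K_i`. -/
def generalizedAchievementSet (K : ℕ → Set ℝ) : Set ℝ :=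
  {s : ℝ | ∃ f : ℕ → ℝ, (∀ i, f i ∈ K i) ∧ s = ∑' i, f i}

open Set Filter Topology Metric

theorem generalizedAchievementSet_eq_range (K : ℕ → Set ℝ) :
    generalizedAchievementSet K = range fun x : (∀ i, K i) => ∑' i, (x i : ℝ) := by
  ext s
  constructor
  · rintro ⟨f, hf, rfl⟩
    exact ⟨fun i => ⟨f i, hf i⟩, rfl⟩
  · rintro ⟨x, rfl⟩
    exact ⟨fun i => x i, fun i => (x i).2, rfl⟩

theorem add_sub_mem_generalizedAchievementSet {K : ℕ → Set ℝ} {f : ℕ → ℝ}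
    (hf : ∀ i, f i ∈ K i) (hfs : Summable f) {i : ℕ} {y : ℝ} (hy : y ∈ K i) :
    y - f i + ∑' j, f j ∈ generalizedAchievementSet K := by
  classical
  refine ⟨Function.update f i y, ?_, (hfs.hasSum.update i y).tsum_eq.symm⟩
  exact (Function.forall_update_iff f (p := fun j x => x ∈ K j)).2 ⟨hy, fun j _ => hf j⟩

theorem Metric.nontrivial_of_diam_pos {α : Type*} [PseudoMetricSpace α] {s : Set α}
    (hs : 0 < diam s) : s.Nontrivial :=
  not_subsingleton_iff.mp fun h => hs.ne' (diam_subsingleton h)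

section DominatedFactors

variable {K : ℕ → Set ℝ} {u : ℕ → ℝ} (hbound : ∀ i, ∀ x ∈ K i, ‖x‖ ≤ u i) (hu : Summable u)
include hbound hu

theorem isCompact_generalizedAchievementSet (hcompact : ∀ i, IsCompact (K i)) :
    IsCompact (generalizedAchievementSet K) := by
  have := fun i => isCompact_iff_compactSpace.mp (hcompact i)
  rw [generalizedAchievementSet_eq_range]
  exact isCompact_range <| continuous_tsum (fun i => (continuous_apply i).subtype_val) hu
    fun i x => hbound i _ (x i).2

theorem preperfect_generalizedAchievementSet (hdiam : ∀ i, 0 < diam (K i))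
    (hdiam0 : Tendsto (fun i => diam (K i)) atTop (𝓝 0)) :
    Preperfect (generalizedAchievementSet K) := by
  rintro _ ⟨f, hf, rfl⟩
  rw [accPt_iff_nhds]
  intro U hU
  obtain ⟨ε, hε, hball⟩ := Metric.mem_nhds_iff.mp hU
  obtain ⟨i, hi⟩ := (hdiam0.eventually (gt_mem_nhds hε)).exists
  obtain ⟨y, hy, hyne⟩ := (nontrivial_of_diam_pos (hdiam i)).exists_ne (f i)
  have hfs : Summable f := .of_norm_bounded hu fun j => hbound j _ (hf j)
  have hbdd : Bornology.IsBounded (K i) := isBounded_iff_forall_norm_le.2 ⟨u i, hbound i⟩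
  refine ⟨y - f i + ∑' j, f j, ⟨hball ?_, add_sub_mem_generalizedAchievementSet hf hfs hy⟩, ?_⟩
  · rw [mem_ball, Real.dist_eq, add_sub_cancel_right, ← Real.dist_eq]
    exact (dist_le_diam_of_mem hbdd hy (hf i)).trans_lt hi
  · simpa [sub_eq_zero] using hyne

end DominatedFactors

theorem generalizedAchievementSet_perfect_general (K : ℕ → Set ℝ)
    (hcompact : ∀ i, IsCompact (K i)) (hnonneg : ∀ i, K i ⊆ Set.Ici 0)
    (hdiam : ∀ i, 0 < Metric.diam (K i))
    (hdiam0 : Filter.Tendsto (fun i => Metric.diam (K i)) Filter.atTop (nhds 0))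
    (hsum : Summable (fun i => sSup (K i))) :
    IsCompact (generalizedAchievementSet K) ∧ Perfect (generalizedAchievementSet K) := by
  have hbound : ∀ i, ∀ x ∈ K i, ‖x‖ ≤ sSup (K i) := fun i x hx => by
    rw [Real.norm_of_nonneg (hnonneg i hx)]
    exact le_csSup (hcompact i).bddAbove hx
  have hS := isCompact_generalizedAchievementSet hbound hsum hcompact
  exact ⟨hS, hS.isClosed, preperfect_generalizedAchievementSet hbound hsum hdiam hdiam0⟩

/-- Let `(K_i)` be compact subsets of `[0,∞)` containing `0`, with positive diameters tending
to `0` and `∑ sup(K_i) < ∞`. Then `S = { ∑ x_i : x_i ∈ K_i }` is a perfect set: compact with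
no isolated points. -/
theorem generalizedAchievementSet_perfect (K : ℕ → Set ℝ)
    (hcompact : ∀ i, IsCompact (K i)) (hnonneg : ∀ i, K i ⊆ Set.Ici 0)
    (hzero : ∀ i, (0 : ℝ) ∈ K i) (hdiam : ∀ i, 0 < Metric.diam (K i))
    (hdiam0 : Filter.Tendsto (fun i => Metric.diam (K i)) Filter.atTop (nhds 0))
    (hsum : Summable (fun i => sSup (K i))) :
    IsCompact (generalizedAchievementSet K) ∧ Perfect (generalizedAchievementSet K) :=
  generalizedAchievementSet_perfect_general K hcompact hnonneg hdiam hdiam0 hsum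
end
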